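/- Let M be a subgroup of PGL_2(F_q) and f a monic irreducible polynomial of degree r ≥ 3 over F_q such that every element of M fixes f under the action (A, f) ↦ ((−cx+a)^r f((dx−b)/(−cx+a)))*. Then M is cyclic. -/

import Mathlib

open Polynomial

/-- `PGL₂(F) = GL₂(F)` modulo its center. -/
abbrev PGL2 (F : Type) [Field F] :=
  Matrix.GeneralLinearGroup (Fin 2) F ⧸ Subgroup.center (Matrix.GeneralLinearGroup (Fin 2) F)

set_option linter.unusedSectionVars false

lemma div_div_aux {K : Type*} [Field K] (a b c : K) (hc : c ≠ 0) : (a/c)/(b/c) = a/b := by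
  rcases eq_or_ne b 0 with rfl | hb
  · simp
  · field_simp

lemma center_scalar {F : Type} [Field F] (z : Matrix.GeneralLinearGroup (Fin 2) F)
    (hz : z ∈ Subgroup.center (Matrix.GeneralLinearGroup (Fin 2) F)) :
    (z : Matrix (Fin 2) (Fin 2) F)
      = (z : Matrix (Fin 2) (Fin 2) F) 0 0 • (1 : Matrix (Fin 2) (Fin 2) F) := by
  rw [Subgroup.mem_center_iff] at hz
  set M : Matrix (Fin 2) (Fin 2) F := (z : Matrix (Fin 2) (Fin 2) F) with hM
  have hprod : (!![(1:F),1;0,1]) * !![1,-1;0,1] = 1 := by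
    rw [Matrix.mul_fin_two, Matrix.one_fin_two]; norm_num
  have hprod' : (!![(1:F),-1;0,1]) * !![1,1;0,1] = 1 := by
    rw [Matrix.mul_fin_two, Matrix.one_fin_two]; norm_num
  have hprod2 : (!![(1:F),0;1,1]) * !![1,0;-1,1] = 1 := by
    rw [Matrix.mul_fin_two, Matrix.one_fin_two]; norm_num
  have hprod2' : (!![(1:F),0;-1,1]) * !![1,0;1,1] = 1 := by
    rw [Matrix.mul_fin_two, Matrix.one_fin_two]; norm_num
  have hU := hz ⟨!![1,1;0,1], !![1,-1;0,1], hprod, hprod'⟩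
  have hV := hz ⟨!![1,0;1,1], !![1,0;-1,1], hprod2, hprod2'⟩
  have hU' : !![(1:F),1;0,1] * M = M * !![1,1;0,1] := congrArg Units.val hU
  have hV' : !![(1:F),0;1,1] * M = M * !![1,0;1,1] := congrArg Units.val hV
  rw [Matrix.eta_fin_two M, Matrix.mul_fin_two, Matrix.mul_fin_two] at hU' hV'
  have e1 := congrFun (congrFun hU' 0) 0
  have e2 := congrFun (congrFun hU' 0) 1
  have e3 := congrFun (congrFun hV' 0) 0
  simp [Matrix.cons_val_zero, Matrix.cons_val_one] at e1 e2 e3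
  rw [Matrix.eta_fin_two M]
  have e4 : M 1 1 = M 0 0 := by linear_combination e2
  ext i j
  fin_cases i <;> fin_cases j <;>
    simp [Matrix.smul_apply, Matrix.one_apply, e1, e3, e4]

section main
variable {F : Type} [Field F] [Fintype F] {f : Polynomial F} [Fact (Irreducible f)]

noncomputable def mob (g : Matrix.GeneralLinearGroup (Fin 2) F) (x : AdjoinRoot f) :
    AdjoinRoot f :=
  (algebraMap F _ ((g : Matrix (Fin 2) (Fin 2) F) 1 1) * x
      - algebraMap F _ ((g : Matrix (Fin 2) (Fin 2) F) 0 1)) /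
    (algebraMap F _ ((g : Matrix (Fin 2) (Fin 2) F) 0 0)
      - algebraMap F _ ((g : Matrix (Fin 2) (Fin 2) F) 1 0) * x)

variable (hm : f.Monic) {r : ℕ} (hr : 3 ≤ r) (hd : f.natDegree = r)

include hm hr hd in
lemma indep3 (y : AdjoinRoot f) (hy : aeval y f = 0) (c₀ c₁ c₂ : F)
    (h : algebraMap F _ c₀ + algebraMap F _ c₁ * y + algebraMap F _ c₂ * y ^ 2 = 0) :
    c₀ = 0 ∧ c₁ = 0 ∧ c₂ = 0 := by
  have hi : Irreducible f := Fact.out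
  set p : Polynomial F := C c₀ + C c₁ * X + C c₂ * X ^ 2 with hp
  have hpy : aeval y p = 0 := by
    simp only [hp, map_add, map_mul, map_pow, aeval_C, aeval_X]
    exact h
  have hp0 : p = 0 := by
    by_contra hne
    have hdvd : f ∣ p := minpoly.eq_of_irreducible_of_monic hi hy hm ▸ minpoly.dvd F y hpy
    have hle : f.natDegree ≤ p.natDegree := Polynomial.natDegree_le_of_dvd hdvd hne
    have h2 : p.natDegree ≤ 2 := by rw [hp]; compute_degree
    omega
  refine ⟨?_, ?_, ?_⟩
  · have := congrArg (fun q => Polynomial.coeff q 0) hp0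
    simpa [hp] using this
  · have := congrArg (fun q => Polynomial.coeff q 1) hp0
    simpa [hp] using this
  · have := congrArg (fun q => Polynomial.coeff q 2) hp0
    simpa [hp] using this

lemma det_ne_zero' (g : Matrix.GeneralLinearGroup (Fin 2) F) :
    (g : Matrix (Fin 2) (Fin 2) F).det ≠ 0 := by
  have h : ((g : Matrix (Fin 2) (Fin 2) F) * (g⁻¹ : Matrix.GeneralLinearGroup (Fin 2) F)).det = 1 := by
    rw [← Matrix.GeneralLinearGroup.coe_mul, mul_inv_cancel]
    simp
  rw [Matrix.det_mul] at h
  intro h0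
  rw [h0, zero_mul] at h
  exact zero_ne_one h

include hm hr hd in
lemma denom_ne (g : Matrix.GeneralLinearGroup (Fin 2) F) (y : AdjoinRoot f)
    (hy : aeval y f = 0) :
    algebraMap F (AdjoinRoot f) ((g : Matrix (Fin 2) (Fin 2) F) 0 0)
      - algebraMap F _ ((g : Matrix (Fin 2) (Fin 2) F) 1 0) * y ≠ 0 := by
  intro h0
  have h := indep3 hm hr hd y hy ((g : Matrix (Fin 2) (Fin 2) F) 0 0)
    (-(g : Matrix (Fin 2) (Fin 2) F) 1 0) 0 (by rw [map_neg, map_zero]; linear_combination h0)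
  have hdet := det_ne_zero' g
  rw [Matrix.det_fin_two] at hdet
  apply hdet
  have h10 : (g : Matrix (Fin 2) (Fin 2) F) 1 0 = 0 := by
    have := h.2.1; exact neg_eq_zero.mp this
  rw [h.1, h10]
  ring
theorem aeval_root' : aeval (AdjoinRoot.root f) f = 0 := by
  rw [AdjoinRoot.aeval_eq, AdjoinRoot.mk_self]

include hm hr hd in
theorem mob_root (g : Matrix.GeneralLinearGroup (Fin 2) F) (c : F)
    (hsum : (∑ i ∈ Finset.range (r + 1), C (f.coeff i) *
            (C ((g : Matrix (Fin 2) (Fin 2) F) 1 1) * X - C ((g : Matrix (Fin 2) (Fin 2) F) 0 1)) ^ i *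
            (C ((g : Matrix (Fin 2) (Fin 2) F) 0 0) - C ((g : Matrix (Fin 2) (Fin 2) F) 1 0) * X) ^ (r - i))
          = C c * f) :
    aeval (mob g (AdjoinRoot.root f)) f = 0 := by
  set α := AdjoinRoot.root f
  set ι := algebraMap F (AdjoinRoot f)
  set a := (g : Matrix (Fin 2) (Fin 2) F) 0 0
  set b := (g : Matrix (Fin 2) (Fin 2) F) 0 1
  set cc := (g : Matrix (Fin 2) (Fin 2) F) 1 0
  set d := (g : Matrix (Fin 2) (Fin 2) F) 1 1
  set D : AdjoinRoot f := ι a - ι cc * α with hD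
  set N : AdjoinRoot f := ι d * α - ι b with hN
  have hDne : D ≠ 0 := denom_ne hm hr hd g α aeval_root'
  have hval := congrArg (aeval α) hsum
  simp only [map_sum, map_mul, map_pow, map_sub, aeval_C, aeval_X] at hval
  rw [aeval_root', mul_zero] at hval
  -- hval : ∑ i in range (r+1), ι (f.coeff i) * N ^ i * D ^ (r - i) = 0
  have hβ : ∀ i ∈ Finset.range (r + 1),
      ι (f.coeff i) * N ^ i * D ^ (r - i)
        = (f.coeff i • (mob g α) ^ i) * D ^ r := by
    intro i hi
    rw [Finset.mem_range, Nat.lt_succ_iff] at hi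
    have hNβ : N = mob g α * D := by
      rw [mob, ← hD, ← hN, div_mul_cancel₀ _ hDne]
    rw [hNβ, mul_pow, Algebra.smul_def]
    have hpow : D ^ i * D ^ (r - i) = D ^ r := by rw [← pow_add, Nat.add_sub_cancel' hi]
    linear_combination (ι (f.coeff i) * mob g α ^ i) * hpow
  rw [Finset.sum_congr rfl hβ, ← Finset.sum_mul] at hval
  rcases mul_eq_zero.mp hval with h | h
  · rw [Polynomial.aeval_eq_sum_range, hd]
    exact h
  · exact absurd h (pow_ne_zero _ hDne)

lemma sigma_mob (σ : AdjoinRoot f ≃ₐ[F] AdjoinRoot f) (g : Matrix.GeneralLinearGroup (Fin 2) F)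
    (x : AdjoinRoot f) : σ (mob g x) = mob g (σ x) := by
  simp [mob, map_div₀, ← AdjoinRoot.algebraMap_eq, AlgEquiv.commutes]

lemma uniq_alg {σ τ : AdjoinRoot f ≃ₐ[F] AdjoinRoot f}
    (h : σ (AdjoinRoot.root f) = τ (AdjoinRoot.root f)) : σ = τ := by
  have h2 : (σ : AdjoinRoot f →ₐ[F] AdjoinRoot f) = τ := AdjoinRoot.algHom_ext h
  exact AlgEquiv.ext fun x => AlgHom.congr_fun h2 x

lemma exists_sigma (hm : f.Monic) (y : AdjoinRoot f) (hy : aeval y f = 0) :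
    ∃ σ : AdjoinRoot f ≃ₐ[F] AdjoinRoot f, σ (AdjoinRoot.root f) = y := by
  have hf0 : f ≠ 0 := hm.ne_zero
  haveI : Module.Finite F (AdjoinRoot f) :=
    Module.Finite.of_basis (AdjoinRoot.powerBasis hf0).basis
  set φ : AdjoinRoot f →ₐ[F] AdjoinRoot f := AdjoinRoot.liftAlgHom f (Algebra.ofId F _) y hy
  have hinj : Function.Injective φ := φ.toRingHom.injective
  have hbij : Function.Bijective φ :=
    ⟨hinj, (LinearMap.injective_iff_surjective (f := φ.toLinearMap)).mp hinj⟩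
  exact ⟨AlgEquiv.ofBijective φ hbij, AdjoinRoot.liftAlgHom_root f (Algebra.ofId F _) y hy⟩

lemma mob_comp (g₁ g₂ : Matrix.GeneralLinearGroup (Fin 2) F) (x : AdjoinRoot f)
    (hD : algebraMap F (AdjoinRoot f) ((g₁ : Matrix (Fin 2) (Fin 2) F) 0 0)
      - algebraMap F _ ((g₁ : Matrix (Fin 2) (Fin 2) F) 1 0) * x ≠ 0) :
    mob g₂ (mob g₁ x) = mob (g₁ * g₂) x := by
  set ι := algebraMap F (AdjoinRoot f)
  set a₁ := (g₁ : Matrix (Fin 2) (Fin 2) F) 0 0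
  set b₁ := (g₁ : Matrix (Fin 2) (Fin 2) F) 0 1
  set c₁ := (g₁ : Matrix (Fin 2) (Fin 2) F) 1 0
  set d₁ := (g₁ : Matrix (Fin 2) (Fin 2) F) 1 1
  set a₂ := (g₂ : Matrix (Fin 2) (Fin 2) F) 0 0
  set b₂ := (g₂ : Matrix (Fin 2) (Fin 2) F) 0 1
  set c₂ := (g₂ : Matrix (Fin 2) (Fin 2) F) 1 0
  set d₂ := (g₂ : Matrix (Fin 2) (Fin 2) F) 1 1
  set N := ι d₁ * x - ι b₁ with hN
  set D := ι a₁ - ι c₁ * x with hD'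
  have hmul : ((g₁ * g₂ : Matrix.GeneralLinearGroup (Fin 2) F) : Matrix (Fin 2) (Fin 2) F)
      = (g₁ : Matrix (Fin 2) (Fin 2) F) * (g₂ : Matrix (Fin 2) (Fin 2) F) := rfl
  have e00 : ((g₁ * g₂ : Matrix.GeneralLinearGroup (Fin 2) F) : Matrix (Fin 2) (Fin 2) F) 0 0
      = a₁ * a₂ + b₁ * c₂ := by rw [hmul, Matrix.mul_apply, Fin.sum_univ_two]
  have e01 : ((g₁ * g₂ : Matrix.GeneralLinearGroup (Fin 2) F) : Matrix (Fin 2) (Fin 2) F) 0 1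
      = a₁ * b₂ + b₁ * d₂ := by rw [hmul, Matrix.mul_apply, Fin.sum_univ_two]
  have e10 : ((g₁ * g₂ : Matrix.GeneralLinearGroup (Fin 2) F) : Matrix (Fin 2) (Fin 2) F) 1 0
      = c₁ * a₂ + d₁ * c₂ := by rw [hmul, Matrix.mul_apply, Fin.sum_univ_two]
  have e11 : ((g₁ * g₂ : Matrix.GeneralLinearGroup (Fin 2) F) : Matrix (Fin 2) (Fin 2) F) 1 1
      = c₁ * b₂ + d₁ * d₂ := by rw [hmul, Matrix.mul_apply, Fin.sum_univ_two]
  have hw : mob g₁ x = N / D := rfl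
  have hnum : ι d₂ * (N / D) - ι b₂ = (ι d₂ * N - ι b₂ * D) / D := by
    field_simp [hD]
  have hden : ι a₂ - ι c₂ * (N / D) = (ι a₂ * D - ι c₂ * N) / D := by
    field_simp [hD]
  rw [mob, hw, ← hw, hw, hnum, hden, div_div_aux _ _ _ hD]
  rw [mob, e00, e01, e10, e11]
  congr 1 <;> push_cast [map_add, map_mul] <;> ring
lemma mob_wd (g g' : Matrix.GeneralLinearGroup (Fin 2) F)
    (h : (QuotientGroup.mk g : PGL2 F) = QuotientGroup.mk g') (x : AdjoinRoot f) :
    mob g x = mob g' x := by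
  set ι := algebraMap F (AdjoinRoot f)
  have hz : g⁻¹ * g' ∈ Subgroup.center (Matrix.GeneralLinearGroup (Fin 2) F) :=
    (QuotientGroup.eq).mp h
  set z := g⁻¹ * g' with hzdef
  set t : F := (z : Matrix (Fin 2) (Fin 2) F) 0 0 with ht
  have hsc := center_scalar z hz
  have ht0 : t ≠ 0 := by
    intro h0
    apply det_ne_zero' z
    rw [hsc, ← ht, h0, zero_smul, Matrix.det_zero]
  have hg' : (g' : Matrix (Fin 2) (Fin 2) F) = t • (g : Matrix (Fin 2) (Fin 2) F) := by
    have : g' = g * z := by rw [hzdef, ← mul_assoc, mul_inv_cancel, one_mul]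
    rw [this, Units.val_mul, hsc, Matrix.mul_smul, mul_one]
  have hent : ∀ i j, (g' : Matrix (Fin 2) (Fin 2) F) i j
      = t * (g : Matrix (Fin 2) (Fin 2) F) i j := by
    intro i j; rw [hg']; rfl
  rw [mob, mob, hent, hent, hent, hent]
  push_cast [map_mul]
  rw [show ι t * ι ((g : Matrix (Fin 2) (Fin 2) F) 1 1) * x - ι t * ι ((g : Matrix (Fin 2) (Fin 2) F) 0 1)
      = ι t * (ι ((g : Matrix (Fin 2) (Fin 2) F) 1 1) * x - ι ((g : Matrix (Fin 2) (Fin 2) F) 0 1)) by ring,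
    show ι t * ι ((g : Matrix (Fin 2) (Fin 2) F) 0 0) - ι t * ι ((g : Matrix (Fin 2) (Fin 2) F) 1 0) * x
      = ι t * (ι ((g : Matrix (Fin 2) (Fin 2) F) 0 0) - ι ((g : Matrix (Fin 2) (Fin 2) F) 1 0) * x) by ring]
  rw [mul_div_mul_left]
  simpa using ht0


include hm in
lemma exists_frob :
    ∃ Frob : AdjoinRoot f ≃ₐ[F] AdjoinRoot f, ∀ x, Frob x = x ^ Fintype.card F := by
  have hf0 : f ≠ 0 := hm.ne_zero
  haveI : Module.Finite F (AdjoinRoot f) :=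
    Module.Finite.of_basis (AdjoinRoot.powerBasis hf0).basis
  haveI : Finite (AdjoinRoot f) := Module.finite_of_finite F
  set p := ringChar F with hpdef
  haveI : CharP F p := ringChar.charP F
  have hp : p.Prime := CharP.char_is_prime F p
  haveI : Fact p.Prime := ⟨hp⟩
  obtain ⟨n, -, hcard⟩ := FiniteField.card F p
  haveI : CharP (AdjoinRoot f) p :=
    charP_of_injective_algebraMap (algebraMap F (AdjoinRoot f)).injective p
  haveI : ExpChar (AdjoinRoot f) p := ExpChar.prime hp
  set φ : AdjoinRoot f →+* AdjoinRoot f := iterateFrobenius (AdjoinRoot f) p n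
  have hφ : ∀ x, φ x = x ^ Fintype.card F := fun x => by
    rw [hcard]; exact iterateFrobenius_def p n x
  set A : AdjoinRoot f →ₐ[F] AdjoinRoot f :=
    { toRingHom := φ,
      commutes' := fun c => by
        show φ (algebraMap F _ c) = algebraMap F _ c
        rw [hφ, ← map_pow, FiniteField.pow_card] }
  have hbij : Function.Bijective A :=
    (Finite.injective_iff_bijective).mp A.toRingHom.injective
  exact ⟨AlgEquiv.ofBijective A hbij, hφ⟩

lemma frob_pow (Frob : AdjoinRoot f ≃ₐ[F] AdjoinRoot f)
    (hF : ∀ x, Frob x = x ^ Fintype.card F) (k : ℕ) (x : AdjoinRoot f) :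
    (Frob ^ k) x = x ^ (Fintype.card F) ^ k := by
  induction k with
  | zero => simp
  | succ k ih =>
    rw [pow_succ', AlgEquiv.mul_apply, hF, ih, ← pow_mul, ← pow_succ]

include hm hd in
lemma frob_ne_one (Frob : AdjoinRoot f ≃ₐ[F] AdjoinRoot f)
    (hF : ∀ x, Frob x = x ^ Fintype.card F) (s : ℕ) (hs0 : 0 < s) (hsr : s < r) :
    Frob ^ s ≠ 1 := by
  intro h1
  set q := Fintype.card F with hq
  have hq1 : 1 < q := Fintype.one_lt_card
  have hfix : ∀ x : AdjoinRoot f, x ^ q ^ s = x := by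
    intro x
    have := frob_pow Frob hF s x
    rw [h1] at this
    simpa using this.symm
  have hf0 : f ≠ 0 := hm.ne_zero
  haveI : Module.Finite F (AdjoinRoot f) :=
    Module.Finite.of_basis (AdjoinRoot.powerBasis hf0).basis
  haveI : Fintype (AdjoinRoot f) := Module.fintypeOfFintype (AdjoinRoot.powerBasis hf0).basis
  have hcardK : Fintype.card (AdjoinRoot f) = q ^ r := by
    rw [Module.card_eq_pow_finrank (K := F), (AdjoinRoot.powerBasis hf0).finrank, AdjoinRoot.powerBasis_dim, hd]
  set P : Polynomial (AdjoinRoot f) := X ^ q ^ s - X with hP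
  have hqs1 : 1 < q ^ s := one_lt_pow₀ hq1 hs0.ne'
  have hPne : P ≠ 0 := by
    intro h0
    have := congrArg (fun p => Polynomial.coeff p (q ^ s)) h0
    simp only [hP, coeff_sub, coeff_X_pow, coeff_X, coeff_zero, if_pos rfl] at this
    rw [if_neg (by omega : ¬ (1:ℕ) = q ^ s)] at this
    simp at this
  have hdeg : P.natDegree ≤ q ^ s := by
    rw [hP]
    refine le_trans (Polynomial.natDegree_sub_le _ _) ?_
    simp [Polynomial.natDegree_X_pow, Polynomial.natDegree_X]
    omega
  have hsub : (Finset.univ : Finset (AdjoinRoot f)) ⊆ P.roots.toFinset := by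
    intro x _
    rw [Multiset.mem_toFinset, Polynomial.mem_roots hPne]
    show Polynomial.eval x P = 0
    simp [hP, hfix x]
  have hle : Fintype.card (AdjoinRoot f) ≤ q ^ s := by
    calc Fintype.card (AdjoinRoot f) = (Finset.univ : Finset (AdjoinRoot f)).card := rfl
      _ ≤ P.roots.toFinset.card := Finset.card_le_card hsub
      _ ≤ Multiset.card P.roots := P.roots.toFinset_card_le
      _ ≤ P.natDegree := P.card_roots'
      _ ≤ q ^ s := hdeg
  rw [hcardK] at hle
  exact absurd hle (not_le.mpr (Nat.pow_lt_pow_right hq1 hsr))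

include hm hd in
lemma root_classify (Frob : AdjoinRoot f ≃ₐ[F] AdjoinRoot f)
    (hF : ∀ x, Frob x = x ^ Fintype.card F) (hr3 : 0 < r)
    (y : AdjoinRoot f) (hy : aeval y f = 0) :
    ∃ k, k < r ∧ y = (Frob ^ k) (AdjoinRoot.root f) := by
  set q := Fintype.card F with hq
  set α := AdjoinRoot.root f with hα
  have hf0 : f ≠ 0 := hm.ne_zero
  -- the candidate roots
  have hne : ∀ k l, k < l → l < r → (Frob ^ k) α ≠ (Frob ^ l) α := by
    intro k l hkl hlr heq
    have h2 : (Frob ^ k) ((Frob ^ (l - k)) α) = (Frob ^ k) α := by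
      rw [← AlgEquiv.mul_apply, ← pow_add, Nat.add_sub_cancel' hkl.le]
      exact heq.symm
    have h3 : (Frob ^ (l - k)) α = α := (Frob ^ k).injective h2
    have h4 : Frob ^ (l - k) = 1 := uniq_alg (by simpa using h3)
    exact frob_ne_one hm hd Frob hF (l - k) (by omega) (by omega) h4
  have hroot : ∀ k, aeval ((Frob ^ k) α) f = 0 := by
    intro k
    have := Polynomial.aeval_algHom_apply (Frob ^ k : AdjoinRoot f ≃ₐ[F] AdjoinRoot f).toAlgHom α f
    simp only [AlgEquiv.toAlgHom_apply] at this
    rw [this, aeval_root', map_zero]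
  set S : Finset (AdjoinRoot f) := (Finset.range r).image (fun k => (Frob ^ k) α) with hS
  have hinj : Set.InjOn (fun k => (Frob ^ k) α) (Finset.range r) := by
    intro k hk l hl hkl
    simp only [Finset.coe_range, Set.mem_Iio] at hk hl
    rcases lt_trichotomy k l with h | h | h
    · exact absurd hkl (hne k l h hl)
    · exact h
    · exact absurd hkl.symm (hne l k h hk)
  have hScard : S.card = r := by
    rw [hS, Finset.card_image_of_injOn hinj, Finset.card_range]
  have hmem_roots : ∀ z : AdjoinRoot f, aeval z f = 0 ↔
      z ∈ (f.map (algebraMap F (AdjoinRoot f))).roots.toFinset := by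
    intro z
    rw [Multiset.mem_toFinset,
      Polynomial.mem_roots_map_of_injective (algebraMap F (AdjoinRoot f)).injective hf0,
      Polynomial.aeval_def]
  have hsub : S ⊆ (f.map (algebraMap F (AdjoinRoot f))).roots.toFinset := by
    intro z hz
    rw [hS, Finset.mem_image] at hz
    obtain ⟨k, -, rfl⟩ := hz
    exact (hmem_roots _).mp (hroot k)
  have hcardle : (f.map (algebraMap F (AdjoinRoot f))).roots.toFinset.card ≤ r := by
    refine le_trans (Multiset.toFinset_card_le _) (le_trans (Polynomial.card_roots' _) ?_)
    rw [Polynomial.natDegree_map, hd]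
  have hSeq : S = (f.map (algebraMap F (AdjoinRoot f))).roots.toFinset :=
    Finset.eq_of_subset_of_card_le hsub (by omega)
  have hyS : y ∈ S := by
    rw [hSeq]
    exact (hmem_roots y).mp hy
  rw [hS, Finset.mem_image] at hyS
  obtain ⟨k, hk, hky⟩ := hyS
  exact ⟨k, Finset.mem_range.mp hk, hky.symm⟩

include hm hd hr in
lemma gal_cyclic : IsCyclic (AdjoinRoot f ≃ₐ[F] AdjoinRoot f) := by
  obtain ⟨Frob, hF⟩ := exists_frob hm
  refine ⟨⟨Frob, fun σ => ?_⟩⟩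
  have hy : aeval (σ (AdjoinRoot.root f)) f = 0 := by
    have := Polynomial.aeval_algHom_apply σ.toAlgHom (AdjoinRoot.root f) f
    simp only [AlgEquiv.toAlgHom_apply] at this
    rw [this, aeval_root', map_zero]
  obtain ⟨k, -, hk⟩ := root_classify hm hd Frob hF (by omega) _ hy
  have : σ = Frob ^ k := uniq_alg hk
  rw [this]
  exact Subgroup.npow_mem_zpowers Frob k


end main

/-- If every element of a subgroup `M` of `PGL₂(F_q)` fixes a monic irreducible polynomial
`f` of degree `r ≥ 3` under the action
`A·f = ((−cx+a)^r f((dx−b)/(−cx+a)))^*` (i.e. `Σ_i f_i (dx−b)^i (a−cx)^{r−i}` is a nonzero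
scalar multiple of `f`), then `M` is cyclic. -/
theorem stmt_17 (r : ℕ) (hr : 3 ≤ r)
    (F : Type) [Field F] [Fintype F]
    (f : Polynomial F) (hm : f.Monic) (hi : Irreducible f) (hd : f.natDegree = r)
    (M : Subgroup (PGL2 F))
    (hM : ∀ g : Matrix.GeneralLinearGroup (Fin 2) F,
      (QuotientGroup.mk g : PGL2 F) ∈ M →
      ∃ c : F, c ≠ 0 ∧
        (∑ i ∈ Finset.range (r + 1), C (f.coeff i) *
            (C ((g : Matrix (Fin 2) (Fin 2) F) 1 1) * X - C ((g : Matrix (Fin 2) (Fin 2) F) 0 1)) ^ i *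
            (C ((g : Matrix (Fin 2) (Fin 2) F) 0 0) - C ((g : Matrix (Fin 2) (Fin 2) F) 1 0) * X) ^ (r - i))
          = C c * f) :
    IsCyclic M := by
  haveI : Fact (Irreducible f) := ⟨hi⟩
  set α := AdjoinRoot.root f with hα
  have hlift : ∀ m : M, ∃ g : Matrix.GeneralLinearGroup (Fin 2) F,
      (QuotientGroup.mk g : PGL2 F) = m.val := fun m => QuotientGroup.mk_surjective m.val
  choose lift hlift using hlift
  have hroot : ∀ g : Matrix.GeneralLinearGroup (Fin 2) F,
      (QuotientGroup.mk g : PGL2 F) ∈ M → aeval (mob g α) f = 0 := by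
    intro g hg
    obtain ⟨c, -, hsum⟩ := hM g hg
    exact mob_root hm hr hd g c hsum
  have hsig : ∀ m : M, ∃ σ : AdjoinRoot f ≃ₐ[F] AdjoinRoot f,
      σ α = mob (lift m) α := fun m =>
    exists_sigma hm _ (hroot (lift m) (by rw [hlift m]; exact m.2))
  choose Φ hΦ using hsig
  have hmul : ∀ m₁ m₂ : M, Φ (m₁ * m₂) = Φ m₁ * Φ m₂ := by
    intro m₁ m₂
    apply uniq_alg
    rw [hΦ, AlgEquiv.mul_apply, hΦ, sigma_mob, hΦ]
    rw [mob_comp (lift m₁) (lift m₂) α (denom_ne hm hr hd (lift m₁) α aeval_root')]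
    apply mob_wd
    rw [hlift (m₁ * m₂)]
    show ((m₁ * m₂ : M) : PGL2 F) = _
    rw [Subgroup.coe_mul, ← hlift m₁, ← hlift m₂]
    rfl
  let ΦM : M →* (AdjoinRoot f ≃ₐ[F] AdjoinRoot f) := MonoidHom.mk' Φ hmul
  have hinj : Function.Injective ΦM := by
    rw [injective_iff_map_eq_one]
    intro m h1
    have hmob : mob (lift m) α = α := by
      rw [← hΦ m]
      show Φ m α = α
      rw [show Φ m = 1 from h1]
      rfl
    set g := lift m with hg
    set a := (g : Matrix (Fin 2) (Fin 2) F) 0 0 with ha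
    set b := (g : Matrix (Fin 2) (Fin 2) F) 0 1 with hb
    set cc := (g : Matrix (Fin 2) (Fin 2) F) 1 0 with hcc
    set d := (g : Matrix (Fin 2) (Fin 2) F) 1 1 with hdd
    set ι := algebraMap F (AdjoinRoot f) with hι
    have hD : ι a - ι cc * α ≠ 0 := denom_ne hm hr hd g α aeval_root'
    have heq : ι d * α - ι b = α * (ι a - ι cc * α) := by
      rw [mob] at hmob
      exact (div_eq_iff hD).mp hmob
    have h3 := indep3 hm hr hd α aeval_root' (-b) (d - a) cc
      (by rw [map_neg, map_sub]; linear_combination heq)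
    have hb0 : b = 0 := neg_eq_zero.mp h3.1
    have hda : d = a := sub_eq_zero.mp h3.2.1
    have hc0 : cc = 0 := h3.2.2
    have ha0 : a ≠ 0 := by
      intro h0
      apply det_ne_zero' g
      rw [Matrix.det_fin_two, ← ha, ← hb, ← hcc, ← hdd, hda, h0, hc0]
      ring
    have hgv : (g : Matrix (Fin 2) (Fin 2) F) = a • (1 : Matrix (Fin 2) (Fin 2) F) := by
      conv_lhs => rw [Matrix.eta_fin_two (g : Matrix (Fin 2) (Fin 2) F)]
      rw [← ha, ← hb, ← hcc, ← hdd, hb0, hda, hc0]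
      ext i j
      fin_cases i <;> fin_cases j <;> simp [Matrix.smul_apply, Matrix.one_apply]
    have hcen : g ∈ Subgroup.center (Matrix.GeneralLinearGroup (Fin 2) F) := by
      rw [Subgroup.mem_center_iff]
      intro h
      apply Units.ext
      rw [Units.val_mul, Units.val_mul, hgv, Matrix.smul_mul, Matrix.mul_smul,
        Matrix.one_mul, Matrix.mul_one]
    have : m.val = 1 := by
      rw [← hlift m, QuotientGroup.eq_one_iff]
      exact hcen
    exact Subtype.ext this
  haveI : IsCyclic (AdjoinRoot f ≃ₐ[F] AdjoinRoot f) := gal_cyclic hm hr hd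
  haveI : IsCyclic ΦM.range := Subgroup.isCyclic _
  let e : M ≃* ΦM.range := MonoidHom.ofInjective hinj
  exact isCyclic_of_surjective e.symm e.symm.surjective
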